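/- Let n ≥ 3, let f, h : ℝⁿ → ℝ be smooth, f positive, m ≥ 1, ρ ∈ ℝ, and suppose there exist i ≠ j with ∂²f/∂xᵢ∂xⱼ ≢ 0. If f and h satisfy f·∂²h/∂xᵢ∂xⱼ − m·∂²f/∂xᵢ∂xⱼ = 0 for all i ≠ j and f·∂²h/∂xᵢ² − m·∂²f/∂xᵢ² = ρf for all i, and moreover all first partials ∂f/∂xᵢ are nonvanishing, then for every pair i ≠ j the function c_{ij} := (∂f/∂xᵢ)/(∂f/∂xⱼ) is constant on ℝⁿ. -/

import Mathlib

noncomputable def pd {n : ℕ} (i : Fin n) (f : (Fin n → ℝ) → ℝ) : (Fin n → ℝ) → ℝ :=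
  fun x => fderiv ℝ f x (Pi.single i 1)

lemma pd_smooth {n : ℕ} {g : (Fin n → ℝ) → ℝ} (hg : ContDiff ℝ (⊤ : ℕ∞) g) (i : Fin n) :
    ContDiff ℝ (⊤ : ℕ∞) (pd i g) := (hg.fderiv_right (by simp)).clm_apply contDiff_const

lemma pd_snd {n : ℕ} {g : (Fin n → ℝ) → ℝ} (hg : ContDiff ℝ (⊤ : ℕ∞) g) (i j : Fin n)
    (x : Fin n → ℝ) :
    pd j (pd i g) x = fderiv ℝ (fderiv ℝ g) x (Pi.single j 1) (Pi.single i 1) := by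
  have hdg : DifferentiableAt ℝ (fderiv ℝ g) x :=
    ((hg.fderiv_right (m := 1) (WithTop.coe_le_coe.mpr le_top)).differentiable one_ne_zero) x
  show fderiv ℝ (fun y => (fderiv ℝ g y) (Pi.single i 1)) x (Pi.single j 1) = _
  rw [fderiv_clm_apply hdg (differentiableAt_const _)]
  simp

lemma pd_symm {n : ℕ} {g : (Fin n → ℝ) → ℝ} (hg : ContDiff ℝ (⊤ : ℕ∞) g) (i j : Fin n)
    (x : Fin n → ℝ) : pd j (pd i g) x = pd i (pd j g) x := by
  rw [pd_snd hg, pd_snd hg]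
  exact (hg.contDiffAt.isSymmSndFDerivAt (by rw [minSmoothness_of_isRCLikeNormedField]; exact WithTop.coe_le_coe.mpr le_top)) _ _

lemma pd_id {n : ℕ} {F G U : (Fin n → ℝ) → ℝ} (hF : Differentiable ℝ F)
    (hG : Differentiable ℝ G) (hU : Differentiable ℝ U) (c d : ℝ)
    (hid : ∀ y, F y * G y - c * U y = d * F y) (r : Fin n) (x : Fin n → ℝ) :
    F x * pd r G x + G x * pd r F x - c * pd r U x = d * pd r F x := by
  have h1 : (fun y => F y * G y - c * U y) = fun y => d * F y := funext hid
  have h2 := congrArg (fun φ => fderiv ℝ φ x (Pi.single r 1)) h1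
  simp only [fderiv_fun_sub ((hF x).fun_mul (hG x)) ((hU x).const_mul c),
    fderiv_fun_mul (hF x) (hG x), fderiv_const_mul (hU x) c, fderiv_const_mul (hF x) d,
    ContinuousLinearMap.sub_apply, ContinuousLinearMap.add_apply,
    ContinuousLinearMap.smul_apply, smul_eq_mul] at h2
  exact h2

lemma pd_mul {n : ℕ} {A B : (Fin n → ℝ) → ℝ} {x : Fin n → ℝ}
    (hA : DifferentiableAt ℝ A x) (hB : DifferentiableAt ℝ B x) (k : Fin n) :
    pd k (fun y => A y * B y) x = A x * pd k B x + B x * pd k A x := by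
  show fderiv ℝ (fun y => A y * B y) x (Pi.single k 1) = _
  rw [fderiv_fun_mul hA hB]
  simp only [ContinuousLinearMap.add_apply, ContinuousLinearMap.smul_apply, smul_eq_mul]
  rfl

lemma pd_inv {n : ℕ} {G : (Fin n → ℝ) → ℝ} {x : Fin n → ℝ}
    (hG : DifferentiableAt ℝ G x) (hGx : G x ≠ 0) (k : Fin n) :
    pd k (fun y => (G y)⁻¹) x = -((G x) ^ 2)⁻¹ * pd k G x := by
  show fderiv ℝ (fun y => (G y)⁻¹) x (Pi.single k 1) = _
  have hc : (fun y => (G y)⁻¹) = Inv.inv ∘ G := rfl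
  rw [hc, fderiv_comp x (differentiableAt_inv hGx) hG, fderiv_inv]
  simp only [ContinuousLinearMap.coe_comp', Function.comp_apply,
    ContinuousLinearMap.smulRight_apply, ContinuousLinearMap.one_apply, smul_eq_mul]
  show (fderiv ℝ G x) (Pi.single k 1) * -(G x ^ 2)⁻¹ = -(G x ^ 2)⁻¹ * pd k G x
  rw [mul_comm]
  rfl


theorem stmt18 {n m : ℕ} (hn : 3 ≤ n) (hm : 1 ≤ m) (ρ : ℝ)
    (f h : (Fin n → ℝ) → ℝ) (hf : ContDiff ℝ (⊤ : ℕ∞) f) (hh : ContDiff ℝ (⊤ : ℕ∞) h)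
    (hfpos : ∀ x, 0 < f x)
    (hfd : ∀ i : Fin n, ∀ x, pd i f x ≠ 0)
    (hhess : ∃ i j : Fin n, i ≠ j ∧ ∃ x, pd j (pd i f) x ≠ 0)
    (heq1 : ∀ i j : Fin n, i ≠ j → ∀ x,
      f x * pd j (pd i h) x - (m : ℝ) * pd j (pd i f) x = 0)
    (heq2 : ∀ i : Fin n, ∀ x,
      f x * pd i (pd i h) x - (m : ℝ) * pd i (pd i f) x = ρ * f x) :
    ∀ i j : Fin n, i ≠ j → ∃ cij : ℝ, ∀ x, pd i f x / pd j f x = cij := by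
  have hm' : (m : ℝ) ≠ 0 := by positivity
  have Df : Differentiable ℝ f := hf.differentiable (by simp)
  have DH : ∀ p q : Fin n, Differentiable ℝ (pd q (pd p h)) :=
    fun p q => (pd_smooth (pd_smooth hh p) q).differentiable (by simp)
  have DF : ∀ p q : Fin n, Differentiable ℝ (pd q (pd p f)) :=
    fun p q => (pd_smooth (pd_smooth hf p) q).differentiable (by simp)
  -- off-diagonal relation
  have od : ∀ p q r : Fin n, p ≠ q → p ≠ r → ∀ x,
      pd q (pd p f) x * pd r f x = pd r (pd p f) x * pd q f x := by
    intro p q r hpq hpr x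
    have A := pd_id Df (DH p q) (DF p q) (m : ℝ) 0
      (fun y => by simpa using heq1 p q hpq y) r x
    have B := pd_id Df (DH p r) (DF p r) (m : ℝ) 0
      (fun y => by simpa using heq1 p r hpr y) q x
    rw [pd_symm (pd_smooth hh p) q r x] at A
    rw [pd_symm (pd_smooth hf p) q r x] at A
    have e1 : f x * pd q (pd p h) x = (m : ℝ) * pd q (pd p f) x := by
      have := heq1 p q hpq x; linarith
    have e2 : f x * pd r (pd p h) x = (m : ℝ) * pd r (pd p f) x := by
      have := heq1 p r hpr x; linarith
    have e3 : pd q (pd p h) x * pd r f x = pd r (pd p h) x * pd q f x := by linarith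
    have e4 : (m : ℝ) * (pd q (pd p f) x * pd r f x)
        = (m : ℝ) * (pd r (pd p f) x * pd q f x) := by
      calc (m : ℝ) * (pd q (pd p f) x * pd r f x)
          = (f x * pd q (pd p h) x) * pd r f x := by rw [e1]; ring
        _ = f x * (pd q (pd p h) x * pd r f x) := by ring
        _ = f x * (pd r (pd p h) x * pd q f x) := by rw [e3]
        _ = (f x * pd r (pd p h) x) * pd q f x := by ring
        _ = (m : ℝ) * (pd r (pd p f) x * pd q f x) := by rw [e2]; ring
    exact mul_left_cancel₀ hm' e4
  -- diagonal relation
  have dg : ∀ p j : Fin n, p ≠ j → ∀ x,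
      pd p (pd p f) x * pd j f x = pd j (pd p f) x * pd p f x := by
    intro p j hpj x
    have A := pd_id Df (DH p p) (DF p p) (m : ℝ) ρ (fun y => heq2 p y) j x
    have B := pd_id Df (DH p j) (DF p j) (m : ℝ) 0
      (fun y => by simpa using heq1 p j hpj y) p x
    rw [pd_symm (pd_smooth hh p) p j x] at A
    rw [pd_symm (pd_smooth hf p) p j x] at A
    have e1 : f x * pd p (pd p h) x = (m : ℝ) * pd p (pd p f) x + ρ * f x := by
      have := heq2 p x; linarith
    have e2 : f x * pd j (pd p h) x = (m : ℝ) * pd j (pd p f) x := by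
      have := heq1 p j hpj x; linarith
    have e3 : pd p (pd p h) x * pd j f x - pd j (pd p h) x * pd p f x
        = ρ * pd j f x := by linarith
    have e4 : (m : ℝ) * (pd p (pd p f) x * pd j f x)
        = (m : ℝ) * (pd j (pd p f) x * pd p f x) := by
      have e5 : f x * (pd p (pd p h) x * pd j f x)
          - f x * (pd j (pd p h) x * pd p f x) = ρ * pd j f x * f x := by
        have := congrArg (fun t => f x * t) e3
        simp only [mul_sub] at this
        linarith [this]
      calc (m : ℝ) * (pd p (pd p f) x * pd j f x)
          = (f x * pd p (pd p h) x) * pd j f x - ρ * f x * pd j f x := by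
            rw [e1]; ring
        _ = f x * (pd j (pd p h) x * pd p f x) := by
            rw [mul_assoc]; linarith [e5]
        _ = (f x * pd j (pd p h) x) * pd p f x := by ring
        _ = (m : ℝ) * (pd j (pd p f) x * pd p f x) := by rw [e2]; ring
    exact mul_left_cancel₀ hm' e4
  -- key relation: f_{ki} f_j = f_{kj} f_i for i ≠ j
  have key : ∀ k i j : Fin n, i ≠ j → ∀ x,
      pd i (pd k f) x * pd j f x = pd j (pd k f) x * pd i f x := by
    intro k i j hij x
    by_cases hki : k = i
    · subst hki; exact dg k j hij x
    · by_cases hkj : k = j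
      · subst hkj; exact (dg k i (Ne.symm hij) x).symm
      · exact od k i j hki hkj x
  intro i j hij
  set F := pd i f with hFdef
  set G := pd j f with hGdef
  have hdF : Differentiable ℝ F := (pd_smooth hf i).differentiable (by simp)
  have hdG : Differentiable ℝ G := (pd_smooth hf j).differentiable (by simp)
  set q : (Fin n → ℝ) → ℝ := fun y => F y * (G y)⁻¹ with hqdef
  have hq : Differentiable ℝ q := fun y => (hdF y).mul ((hdG y).inv (hfd j y))
  have hzero : ∀ x, fderiv ℝ q x = 0 := by
    intro x
    have hk : ∀ k : Fin n, pd k q x = 0 := by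
      intro k
      have hkey : pd k F x * G x = pd k G x * F x := by
        have h1 : pd k F x = pd i (pd k f) x := pd_symm hf i k x
        have h2 : pd k G x = pd j (pd k f) x := pd_symm hf j k x
        rw [h1, h2, hGdef, hFdef]
        exact key k i j hij x
      rw [hqdef, pd_mul (hdF x) ((hdG x).fun_inv (hfd j x)) k,
        pd_inv (hdG x) (hfd j x) k]
      have hGx : G x ≠ 0 := hfd j x
      field_simp
      linear_combination hkey
    apply ContinuousLinearMap.coe_injective
    apply Module.Basis.ext (Pi.basisFun ℝ (Fin n))
    intro k
    simpa [pd] using hk k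
  refine ⟨q 0, fun x => ?_⟩
  have := is_const_of_fderiv_eq_zero hq hzero x 0
  rw [div_eq_mul_inv]
  exact this
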